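/- arXiv:0904.0080 — 3 statements merged into one kernel-verified Lean document; each statement's English description precedes it below -/
import Mathlib

section
/- Let u be a real-valued random variable with Lebesgue density f and cumulative distribution function F satisfying F(0) = τ for τ ∈ (0,1). Then for every h ∈ ℝ, E[ρ_τ(u − h) − ρ_τ(u)] = ∫_0^h (F(s) − τ) ds ≥ 0, where the integral is the signed (oriented) integral; moreover, for h ≥ 0 this equals ∫_0^h (h − λ) f(λ) dλ, and for h ≤ 0 it equals ∫_h^0 (λ − h) f(λ) dλ. (Note that ρ_τ(u − h) − ρ_τ(u) is bounded by |h|, so the expectation is well defined without moment assumptions.) -/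
/-!
Since `ρ_τ(y) = τ y + max (-y) 0`, the map `h ↦ ρ_τ(x - h)` is Lipschitz with derivative
`𝟙(x < h) - τ` away from `h = x`, so `ρ_τ(x - h) - ρ_τ(x) = ∫_0^h (𝟙(x < s) - τ) ds`. The integrand
is bounded, so taking expectations and exchanging the integrals gives `∫_0^h (P(u < s) - τ) ds`
for any law of `u`. With a density, `P(u < s) - τ = ∫_0^s f`, and integrating this absolutely
continuous primitive by parts gives `∫_0^h (h - λ) f(λ) dλ`, which is nonnegative for either sign
of `h` because `f ≥ 0`.
-/

open MeasureTheory Set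

noncomputable section

/-- Quantile loss function `ρ_τ(u) = u (τ − I(u<0))`. -/
def qloss (τ u : ℝ) : ℝ := u * (τ - if u < 0 then 1 else 0)

lemma qloss_eq_mul_add_max (τ y : ℝ) : qloss τ y = τ * y + max (-y) 0 := by
  unfold qloss
  split_ifs
  · rw [max_eq_left (by linarith)]; ring
  · rw [max_eq_right (by linarith)]; ring

lemma hasDerivAt_max_sub_const_zero {x s : ℝ} (hs : s ≠ x) :
    HasDerivAt (fun s => max (s - x) 0) (if x < s then 1 else 0) s := by
  rcases hs.lt_or_gt with hlt | hlt
  · rw [if_neg hlt.not_gt]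
    apply (hasDerivAt_const s (0 : ℝ)).congr_of_eventuallyEq
    filter_upwards [Iio_mem_nhds hlt] with r hr
    exact max_eq_right (by linarith [mem_Iio.mp hr])
  · rw [if_pos hlt]
    apply ((hasDerivAt_id s).sub_const x).congr_of_eventuallyEq
    filter_upwards [Ioi_mem_nhds hlt] with r hr
    exact max_eq_left (by linarith [mem_Ioi.mp hr])

lemma intervalIntegrable_ite_lt_sub_const (x τ a b : ℝ) :
    IntervalIntegrable (fun s : ℝ => (if x < s then (1 : ℝ) else 0) - τ) volume a b := by
  refine Monotone.intervalIntegrable (fun s t hst => ?_) |>.sub intervalIntegrable_const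
  split_ifs <;> linarith

lemma qloss_sub_qloss_eq_intervalIntegral (τ x h : ℝ) :
    qloss τ (x - h) - qloss τ x = ∫ s in 0..h, ((if x < s then 1 else 0) - τ) := by
  have hderiv : ∀ s ≠ x,
      HasDerivAt (fun s => qloss τ (x - s)) ((if x < s then 1 else 0) - τ) s := by
    intro s hs
    simp_rw [qloss_eq_mul_add_max, neg_sub]
    exact ((((hasDerivAt_id' s).const_sub x).const_mul τ).add
      (hasDerivAt_max_sub_const_zero hs)).congr_deriv (by ring)
  have hcont : Continuous fun s => qloss τ (x - s) := by
    simp_rw [qloss_eq_mul_add_max]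
    fun_prop
  rw [integral_eq_of_hasDerivAt_off_countable _ _ (countable_singleton x) hcont.continuousOn
    (fun s hs => hderiv s hs.2) (intervalIntegrable_ite_lt_sub_const x τ 0 h), sub_zero]

section Expectation

variable {Ω : Type*} [MeasurableSpace Ω] (P : Measure Ω) {u : Ω → ℝ}

lemma integral_ite_lt_sub_const [IsProbabilityMeasure P] (hu : Measurable u) (τ s : ℝ) :
    ∫ ω, ((if u ω < s then (1 : ℝ) else 0) - τ) ∂P = P.real {ω | u ω < s} - τ := by
  have hs : MeasurableSet {ω | u ω < s} := hu measurableSet_Iio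
  have hind : (fun ω => if u ω < s then (1 : ℝ) else 0) = {ω | u ω < s}.indicator 1 := by
    ext ω
    simp [indicator_apply]
  rw [integral_sub _ (integrable_const τ), hind, integral_indicator_one hs]
  · simp
  · exact (integrable_const 1).indicator hs

lemma integrable_uncurry_ite_lt_sub_const [IsFiniteMeasure P] (hu : Measurable u) (τ a b : ℝ) :
    Integrable (Function.uncurry fun s ω => (if u ω < s then (1 : ℝ) else 0) - τ)
      ((volume.restrict (uIoc a b)).prod P) := by
  have : IsFiniteMeasure (volume.restrict (uIoc a b)) := Real.isFiniteMeasure_restrict_Ioc _ _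
  refine Integrable.of_bound ?_ (1 + ‖τ‖) (Filter.Eventually.of_forall fun p => ?_)
  · exact ((Measurable.ite (measurableSet_lt (hu.comp measurable_snd) measurable_fst)
      measurable_const measurable_const).sub measurable_const).aestronglyMeasurable
  · refine (norm_sub_le _ _).trans (add_le_add_left ?_ _)
    split_ifs <;> simp

lemma integral_qloss_sub_qloss [IsProbabilityMeasure P] (hu : Measurable u) (τ h : ℝ) :
    ∫ ω, (qloss τ (u ω - h) - qloss τ (u ω)) ∂P = ∫ s in 0..h, (P.real {ω | u ω < s} - τ) := by
  simp_rw [qloss_sub_qloss_eq_intervalIntegral,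
    ← intervalIntegral_integral_swap (integrable_uncurry_ite_lt_sub_const P hu τ 0 h),
    integral_ite_lt_sub_const P hu]

end Expectation

theorem intervalIntegral_intervalIntegral_eq_integral_sub_mul {f : ℝ → ℝ} {a b : ℝ}
    (hf : IntervalIntegrable f volume a b) :
    ∫ s in a..b, ∫ t in a..s, f t = ∫ t in a..b, (b - t) * f t := by
  have hF := hf.absolutelyContinuousOnInterval_intervalIntegral left_mem_uIcc
  have hg : AbsolutelyContinuousOnInterval (fun s => s - b) a b :=
    ContDiffOn.absolutelyContinuousOnInterval (by fun_prop)
  have hderiv : ∀ᵐ t, t ∈ uIoc a b → deriv (fun s => ∫ t in a..s, f t) t = f t := by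
    filter_upwards [hf.ae_hasDerivAt_integral] with t ht hmem
    exact (ht (uIoc_subset_uIcc hmem) a left_mem_uIcc).deriv
  have hparts := hF.integral_mul_deriv_eq_deriv_mul hg
  simp only [deriv_sub_const, deriv_id'', mul_one, sub_self, mul_zero,
    intervalIntegral.integral_same, zero_mul, zero_sub] at hparts
  rw [hparts, intervalIntegral.integral_congr_ae (hderiv.mono fun t ht hmem => by rw [ht hmem]),
    ← intervalIntegral.integral_neg]
  congr 1
  ext t
  ring

section Density

variable {Ω : Type*} [MeasurableSpace Ω] {P : Measure Ω} {u : Ω → ℝ} {f : ℝ → ℝ}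

lemma integrable_of_map_eq_withDensity [IsFiniteMeasure P] (hf_meas : Measurable f)
    (hf_nonneg : ∀ t, 0 ≤ f t)
    (hdensity : P.map u = volume.withDensity fun t => ENNReal.ofReal (f t)) :
    Integrable f := by
  refine ⟨hf_meas.aestronglyMeasurable, ?_⟩
  rw [hasFiniteIntegral_iff_ofReal (Filter.Eventually.of_forall hf_nonneg),
    ← setLIntegral_univ, ← withDensity_apply _ MeasurableSet.univ, ← hdensity]
  exact measure_lt_top _ _

lemma measureReal_lt_eq_setIntegral_Iic (hu : Measurable u) (hf_meas : Measurable f)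
    (hf_nonneg : ∀ t, 0 ≤ f t)
    (hdensity : P.map u = volume.withDensity fun t => ENNReal.ofReal (f t)) (s : ℝ) :
    P.real {ω | u ω < s} = ∫ t in Iic s, f t := by
  rw [← setIntegral_congr_set Iio_ae_eq_Iic, integral_eq_lintegral_of_nonneg_ae
    (Filter.Eventually.of_forall hf_nonneg) hf_meas.aestronglyMeasurable.restrict,
    ← withDensity_apply _ measurableSet_Iio, ← hdensity, Measure.map_apply hu measurableSet_Iio]
  rfl

end Density

theorem expected_qloss_difference_general
    {Ω : Type*} [MeasurableSpace Ω] (P : Measure Ω) [IsProbabilityMeasure P]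
    (τ : ℝ)
    (u : Ω → ℝ) (hu_meas : Measurable u)
    (f : ℝ → ℝ) (hf_meas : Measurable f) (hf_nonneg : ∀ t, 0 ≤ f t)
    (hdensity : P.map u = volume.withDensity fun t => ENNReal.ofReal (f t))
    (F : ℝ → ℝ) (hF : ∀ s, F s = ∫ t in Set.Iic s, f t)
    (hquantile : F 0 = τ) :
    ∀ h : ℝ,
      (∫ ω, (qloss τ (u ω - h) - qloss τ (u ω)) ∂P) = (∫ s in (0:ℝ)..h, (F s - τ)) ∧
      0 ≤ ∫ ω, (qloss τ (u ω - h) - qloss τ (u ω)) ∂P ∧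
      (0 ≤ h → (∫ ω, (qloss τ (u ω - h) - qloss τ (u ω)) ∂P) =
        ∫ lam in (0:ℝ)..h, (h - lam) * f lam) ∧
      (h ≤ 0 → (∫ ω, (qloss τ (u ω - h) - qloss τ (u ω)) ∂P) =
        ∫ lam in h..(0:ℝ), (lam - h) * f lam) := by
  intro h
  have hf_int := integrable_of_map_eq_withDensity hf_meas hf_nonneg hdensity
  have hcdf : ∀ s, F s - τ = ∫ t in 0..s, f t := fun s => by
    rw [← hquantile, hF, hF, intervalIntegral.integral_Iic_sub_Iic hf_int.integrableOn
      hf_int.integrableOn]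
  have hG : ∫ ω, (qloss τ (u ω - h) - qloss τ (u ω)) ∂P = ∫ s in 0..h, (F s - τ) := by
    simp_rw [integral_qloss_sub_qloss P hu_meas,
      measureReal_lt_eq_setIntegral_Iic hu_meas hf_meas hf_nonneg hdensity, hF]
  have hG_right : ∫ ω, (qloss τ (u ω - h) - qloss τ (u ω)) ∂P =
      ∫ lam in 0..h, (h - lam) * f lam := by
    rw [hG, ← intervalIntegral_intervalIntegral_eq_integral_sub_mul hf_int.intervalIntegrable]
    simp_rw [hcdf]
  have hG_left : ∫ ω, (qloss τ (u ω - h) - qloss τ (u ω)) ∂P =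
      ∫ lam in h..0, (lam - h) * f lam := by
    rw [hG_right, intervalIntegral.integral_symm, ← intervalIntegral.integral_neg]
    simp_rw [neg_mul_eq_neg_mul, neg_sub]
  refine ⟨hG, ?_, fun _ => hG_right, fun _ => hG_left⟩
  rcases le_total 0 h with hh | hh
  · rw [hG_right]
    exact intervalIntegral.integral_nonneg hh fun t ht =>
      mul_nonneg (sub_nonneg.mpr ht.2) (hf_nonneg t)
  · rw [hG_left]
    exact intervalIntegral.integral_nonneg hh fun t ht =>
      mul_nonneg (sub_nonneg.mpr ht.1) (hf_nonneg t)

/-- if `u` has Lebesgue density `f` with CDF `F` satisfying `F(0) = τ`,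
then `E[ρ_τ(u − h) − ρ_τ(u)] = ∫_0^h (F(s) − τ) ds ≥ 0`; for `h ≥ 0` this equals
`∫_0^h (h − λ) f(λ) dλ` and for `h ≤ 0` it equals `∫_h^0 (λ − h) f(λ) dλ`. -/
theorem expected_qloss_difference
    {Ω : Type*} [MeasurableSpace Ω] (P : Measure Ω) [IsProbabilityMeasure P]
    (τ : ℝ) (hτ : τ ∈ Set.Ioo (0:ℝ) 1)
    (u : Ω → ℝ) (hu_meas : Measurable u)
    (f : ℝ → ℝ) (hf_meas : Measurable f) (hf_nonneg : ∀ t, 0 ≤ f t)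
    (hdensity : P.map u = volume.withDensity fun t => ENNReal.ofReal (f t))
    (F : ℝ → ℝ) (hF : ∀ s, F s = ∫ t in Set.Iic s, f t)
    (hquantile : F 0 = τ) :
    ∀ h : ℝ,
      (∫ ω, (qloss τ (u ω - h) - qloss τ (u ω)) ∂P) = (∫ s in (0:ℝ)..h, (F s - τ)) ∧
      0 ≤ ∫ ω, (qloss τ (u ω - h) - qloss τ (u ω)) ∂P ∧
      (0 ≤ h → (∫ ω, (qloss τ (u ω - h) - qloss τ (u ω)) ∂P) =
        ∫ lam in (0:ℝ)..h, (h - lam) * f lam) ∧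
      (h ≤ 0 → (∫ ω, (qloss τ (u ω - h) - qloss τ (u ω)) ∂P) =
        ∫ lam in h..(0:ℝ), (lam - h) * f lam) :=
  expected_qloss_difference_general P τ u hu_meas f hf_meas hf_nonneg hdensity F hF hquantile
end
end

section
/- Let u be a real-valued random variable with Lebesgue density f whose cumulative distribution function F satisfies F(0) = τ for τ ∈ (0,1), and suppose there is ϱ1 > 0 with f(λ) ≥ ϱ1 for all |λ| < ϱ1. Let ε0 > 0 and a ≥ ε0, let b ∈ ℝ, and set u* = max(0, a + u) − a and h = max(0, b) − a. Then for every c with 0 < c < min(ε0, ϱ1), if |h| ≥ c then E[ρ_τ(u* − h) − ρ_τ(u*)] ≥ (1/2) ϱ1 c². -/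
open MeasureTheory

noncomputable section

/-- if `u` has Lebesgue density `f` with `F(0) = τ` and `f ≥ ϱ1` on
`(−ϱ1, ϱ1)`, then for `a ≥ ε0 > 0`, `u* = max(0, a + u) − a`, `h = max(0, b) − a`, and any
`0 < c < min(ε0, ϱ1)` with `|h| ≥ c`, one has
`E[ρ_τ(u* − h) − ρ_τ(u*)] ≥ (1/2) ϱ1 c²`. -/
theorem expected_qloss_difference_lower_bound
    {Ω : Type*} [MeasurableSpace Ω] (P : Measure Ω) [IsProbabilityMeasure P]
    (τ : ℝ) (hτ : τ ∈ Set.Ioo (0:ℝ) 1)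
    (u : Ω → ℝ) (hu_meas : Measurable u)
    (f : ℝ → ℝ) (hf_meas : Measurable f) (hf_nonneg : ∀ t, 0 ≤ f t)
    (hdensity : P.map u = volume.withDensity fun t => ENNReal.ofReal (f t))
    (hquantile : (∫ t in Set.Iic (0:ℝ), f t) = τ)
    (ϱ1 : ℝ) (hϱ1 : 0 < ϱ1) (hf_lb : ∀ t, |t| < ϱ1 → ϱ1 ≤ f t)
    (ε0 : ℝ) (hε0 : 0 < ε0) (a : ℝ) (ha : ε0 ≤ a) (b : ℝ)
    (c : ℝ) (hc0 : 0 < c) (hc1 : c < min ε0 ϱ1)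
    (hbig : c ≤ |max 0 b - a|) :
    (1/2) * ϱ1 * c ^ 2 ≤
      ∫ ω, (qloss τ (max 0 (a + u ω) - a - (max 0 b - a)) -
        qloss τ (max 0 (a + u ω) - a)) ∂P := by
  obtain ⟨hτ0, hτ1⟩ := hτ
  have hca : c < a := lt_of_lt_of_le (lt_of_lt_of_le hc1 (min_le_left _ _)) ha
  have hcρ : c < ϱ1 := lt_of_lt_of_le hc1 (min_le_right _ _)
  have ha0 : 0 < a := lt_of_lt_of_le hε0 ha
  set h : ℝ := max 0 b - a with hh
  have hha : -a ≤ h := by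
    have := le_max_left (0:ℝ) b; simp only [hh]; linarith
  -- the density integrates to 1
  have hint1 : ∫⁻ t, ENNReal.ofReal (f t) = 1 := by
    have hprob : IsProbabilityMeasure (P.map u) := Measure.isProbabilityMeasure_map hu_meas.aemeasurable
    have h1 : (P.map u) Set.univ = 1 := measure_univ
    rw [hdensity, withDensity_apply _ MeasurableSet.univ, Measure.restrict_univ] at h1
    exact h1
  have hf_int : Integrable f := ⟨hf_meas.aestronglyMeasurable,
    (hasFiniteIntegral_iff_ofReal (Filter.Eventually.of_forall hf_nonneg)).2
      (by rw [hint1]; exact ENNReal.one_lt_top)⟩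
  have hf_total : ∫ t, f t = 1 := by
    rw [integral_eq_lintegral_of_nonneg_ae (Filter.Eventually.of_forall hf_nonneg)
      hf_meas.aestronglyMeasurable, hint1]; simp
  -- qloss identity
  have hql : ∀ w : ℝ, qloss τ w = τ * w + max 0 (-w) := by
    intro w; unfold qloss; rcases lt_or_ge w 0 with hw | hw
    · rw [if_pos hw, max_eq_right (by linarith)]; ring
    · rw [if_neg (not_lt.2 hw), max_eq_left (by linarith)]; ring
  -- the integrand as a function of u ω
  set ψ : ℝ → ℝ := fun t => max 0 (h - max (-a) t) - max 0 (-(max (-a) t)) with hψ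
  set G : ℝ → ℝ := fun t => -(τ * h) + ψ t with hG
  have hGeq : ∀ ω, qloss τ (max 0 (a + u ω) - a - (max 0 b - a)) -
      qloss τ (max 0 (a + u ω) - a) = G (u ω) := by
    intro ω
    have hm : max 0 (a + u ω) - a = max (-a) (u ω) := by
      rcases le_total (a + u ω) 0 with hle | hle
      · rw [max_eq_left hle, max_eq_left (by linarith)]; ring
      · rw [max_eq_right hle, max_eq_right (by linarith)]; ring
    rw [hm, ← hh, hql, hql, hG, hψ]
    simp only
    rw [neg_sub]
    ring
  have hψcont : Continuous ψ := by
    rw [hψ]; fun_prop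
  have hψ_bd : ∀ t, |ψ t| ≤ |h| := by
    intro t
    rw [hψ]
    simp only
    rw [show max 0 (h - max (-a) t) = max (h - max (-a) t) 0 from max_comm _ _,
        show max 0 (-(max (-a) t)) = max (-(max (-a) t)) 0 from max_comm _ _]
    calc |max (h - max (-a) t) 0 - max (-(max (-a) t)) 0| ≤ |(h - max (-a) t) - -(max (-a) t)| :=
          abs_max_sub_max_le_abs _ _ _
      _ = |h| := by ring_nf
  -- integrability of f * ψ
  have hfψ_int : Integrable (fun t => f t * ψ t) := by
    refine (hf_int.const_mul |h|).mono
      (hf_meas.aestronglyMeasurable.mul hψcont.measurable.aestronglyMeasurable)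
      (Filter.Eventually.of_forall fun t => ?_)
    simp only [Real.norm_eq_abs, abs_mul, abs_abs, abs_of_nonneg (hf_nonneg t)]
    rw [mul_comm |h| (f t)]
    exact mul_le_mul_of_nonneg_left (hψ_bd t) (hf_nonneg t)
  -- transfer the expectation to a Lebesgue integral
  have htrans : (∫ ω, (qloss τ (max 0 (a + u ω) - a - (max 0 b - a)) -
      qloss τ (max 0 (a + u ω) - a)) ∂P) = ∫ t, f t * G t := by
    have hGcont : Continuous G := by rw [hG]; exact (continuous_const.add hψcont)
    calc (∫ ω, (qloss τ (max 0 (a + u ω) - a - (max 0 b - a)) -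
        qloss τ (max 0 (a + u ω) - a)) ∂P) = ∫ ω, G (u ω) ∂P := by
          exact integral_congr_ae (Filter.Eventually.of_forall hGeq)
      _ = ∫ t, G t ∂(P.map u) := (integral_map hu_meas.aemeasurable
            (hGcont.measurable.aestronglyMeasurable)).symm
      _ = ∫ t, G t ∂(volume.withDensity fun t => ENNReal.ofReal (f t)) := by rw [hdensity]
      _ = ∫ t, G t ∂(volume.withDensity fun t => ((f t).toNNReal : ENNReal)) := rfl
      _ = ∫ t, (f t).toNNReal • G t := integral_withDensity_eq_integral_smul
            hf_meas.real_toNNReal G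
      _ = ∫ t, f t * G t := by
          congr 1; funext t
          rw [NNReal.smul_def, Real.coe_toNNReal _ (hf_nonneg t), smul_eq_mul]
  rw [htrans]
  -- split the integral
  have hsplit : ∫ t, f t * G t = -(τ * h) + ∫ t, f t * ψ t := by
    have heq : (fun t => f t * G t) = fun t => -(τ * h) * f t + f t * ψ t := by
      funext t; rw [hG]; simp only; ring
    rw [heq, integral_add ((hf_int.const_mul _)) hfψ_int, integral_const_mul, hf_total,
      mul_one]
  rw [hsplit]
  have hIsplit : ∫ t, f t * ψ t =
      (∫ t in Set.Iic (0:ℝ), f t * ψ t) + ∫ t in Set.Ioi (0:ℝ), f t * ψ t := by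
    rw [← setIntegral_union (Set.Iic_disjoint_Ioi le_rfl) measurableSet_Ioi
      hfψ_int.integrableOn hfψ_int.integrableOn, Set.Iic_union_Ioi, setIntegral_univ]
  clear hh
  clear_value h
  -- case distinction on the sign of h
  rcases le_abs.mp hbig with hpos | hneg
  · -- case h ≥ c > 0
    have hh0 : 0 < h := lt_of_lt_of_le hc0 hpos
    have hψ_neg : ∀ t ∈ Set.Iic (0:ℝ), ψ t = h := by
      intro t ht
      have hm : max (-a) t ≤ 0 := max_le (by linarith) ht
      have e1 : max 0 (h - max (-a) t) = h - max (-a) t := max_eq_right (by linarith)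
      have e2 : max 0 (-(max (-a) t)) = -(max (-a) t) := max_eq_right (by linarith)
      rw [hψ]; simp only; rw [e1, e2]; ring
    have hψ_pos : ∀ t ∈ Set.Ioi (0:ℝ), ψ t = max 0 (h - t) := by
      intro t ht
      simp only [Set.mem_Ioi] at ht
      have hm : max (-a) t = t := max_eq_right (by linarith)
      have e2 : max 0 (-t) = 0 := max_eq_left (by linarith)
      rw [hψ]; simp only; rw [hm, e2]; ring
    have hI1 : ∫ t in Set.Iic (0:ℝ), f t * ψ t = τ * h := by
      rw [setIntegral_congr_fun measurableSet_Iic (fun t ht => by rw [hψ_neg t ht])]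
      rw [integral_mul_const, hquantile]
    have key : ∫ t in Set.Ioc (0:ℝ) c, ϱ1 * (c - t) ≤ ∫ t in Set.Ioi (0:ℝ), f t * ψ t := by
      have hsub : Set.Ioc (0:ℝ) c ⊆ Set.Ioi 0 := Set.Ioc_subset_Ioi_self
      have hnn : ∀ t ∈ Set.Ioi (0:ℝ), 0 ≤ f t * ψ t := by
        intro t ht
        rw [hψ_pos t ht]
        exact mul_nonneg (hf_nonneg t) (le_max_left _ _)
      calc ∫ t in Set.Ioc (0:ℝ) c, ϱ1 * (c - t)
          ≤ ∫ t in Set.Ioc (0:ℝ) c, f t * ψ t := by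
            refine setIntegral_mono_on ((continuous_const.mul
              (continuous_const.sub continuous_id)).integrableOn_Ioc) (hfψ_int.integrableOn)
              measurableSet_Ioc fun t ht => ?_
            obtain ⟨ht0, htc⟩ := ht
            rw [hψ_pos t ht0]
            have hfl : ϱ1 ≤ f t := hf_lb t (by rw [abs_of_pos ht0]; linarith)
            rw [(max_eq_right (by linarith : (0:ℝ) ≤ h - t) : max 0 (h - t) = h - t)]
            have h1 : ϱ1 * (c - t) ≤ ϱ1 * (h - t) :=
              mul_le_mul_of_nonneg_left (by linarith) hϱ1.le
            have h2 : ϱ1 * (h - t) ≤ f t * (h - t) :=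
              mul_le_mul_of_nonneg_right hfl (by linarith)
            linarith
        _ ≤ ∫ t in Set.Ioi (0:ℝ), f t * ψ t := by
            refine setIntegral_mono_set hfψ_int.integrableOn
              (ae_restrict_of_forall_mem measurableSet_Ioi hnn)
              (Filter.Eventually.of_forall fun t ht => hsub ht)
    have hval : ∫ t in Set.Ioc (0:ℝ) c, ϱ1 * (c - t) = 1/2 * ϱ1 * c^2 := by
      rw [← intervalIntegral.integral_of_le hc0.le]
      rw [intervalIntegral.integral_const_mul]
      rw [intervalIntegral.integral_sub intervalIntegrable_const
        intervalIntegral.intervalIntegrable_id]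
      simp
      ring
    rw [hIsplit, hI1]
    linarith [key, hval]
  · -- case h ≤ -c < 0
    have hh0 : h < 0 := by linarith
    have hhc : h ≤ -c := by linarith
    have hψ_pos : ∀ t ∈ Set.Ioi (0:ℝ), ψ t = 0 := by
      intro t ht
      simp only [Set.mem_Ioi] at ht
      have hm : max (-a) t = t := max_eq_right (by linarith)
      have e1 : max 0 (h - t) = 0 := max_eq_left (by linarith)
      have e2 : max 0 (-t) = 0 := max_eq_left (by linarith)
      rw [hψ]; simp only; rw [hm, e1, e2]; ring
    have hψ_low : ∀ t ∈ Set.Iic h, ψ t = h := by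
      intro t ht
      simp only [Set.mem_Iic] at ht
      have hm : max (-a) t ≤ h := max_le hha ht
      have hm0 : max (-a) t ≤ 0 := le_trans hm hh0.le
      have e1 : max 0 (h - max (-a) t) = h - max (-a) t := max_eq_right (by linarith)
      have e2 : max 0 (-(max (-a) t)) = -(max (-a) t) := max_eq_right (by linarith)
      rw [hψ]; simp only; rw [e1, e2]; ring
    have hψ_mid : ∀ t ∈ Set.Ioc h 0, ψ t = t := by
      intro t ht
      obtain ⟨ht1, ht2⟩ := ht
      have hm : max (-a) t = t := max_eq_right (by linarith)
      have e1 : max 0 (h - t) = 0 := max_eq_left (by linarith)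
      have e2 : max 0 (-t) = -t := max_eq_right (by linarith)
      rw [hψ]; simp only; rw [hm, e1, e2]; ring
    have hIpos : ∫ t in Set.Ioi (0:ℝ), f t * ψ t = 0 := by
      rw [setIntegral_congr_fun measurableSet_Ioi (fun t ht => by rw [hψ_pos t ht, mul_zero])]
      simp
    have hIic_split : ∫ t in Set.Iic (0:ℝ), f t * ψ t =
        (∫ t in Set.Iic h, f t * ψ t) + ∫ t in Set.Ioc h 0, f t * ψ t := by
      rw [← setIntegral_union (Set.Iic_disjoint_Ioc le_rfl) measurableSet_Ioc
        hfψ_int.integrableOn hfψ_int.integrableOn, Set.Iic_union_Ioc_eq_Iic hh0.le]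
    have hIlow : ∫ t in Set.Iic h, f t * ψ t = h * ∫ t in Set.Iic h, f t := by
      rw [setIntegral_congr_fun measurableSet_Iic (fun t ht => by rw [hψ_low t ht])]
      rw [integral_mul_const]; ring
    have hImid : ∫ t in Set.Ioc h 0, f t * ψ t = ∫ t in Set.Ioc h 0, f t * t :=
      setIntegral_congr_fun measurableSet_Ioc (fun t ht => by rw [hψ_mid t ht])
    have hFh : ∫ t in Set.Iic h, f t = τ - ∫ t in Set.Ioc h 0, f t := by
      have : (∫ t in Set.Iic h, f t) + ∫ t in Set.Ioc h 0, f t = τ := by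
        rw [← setIntegral_union (Set.Iic_disjoint_Ioc le_rfl) measurableSet_Ioc
          hf_int.integrableOn hf_int.integrableOn, Set.Iic_union_Ioc_eq_Iic hh0.le, hquantile]
      linarith
    have hlowval : h * (∫ t in Set.Iic h, f t)
        = h * τ - h * ∫ t in Set.Ioc h 0, f t := by rw [hFh]; ring
    -- integrability of f t * t and f t * (t - h) on Ioc h 0
    have hft_int : IntegrableOn (fun t => f t * t) (Set.Ioc h 0) := by
      refine Integrable.mono ((hf_int.const_mul (-h)).integrableOn)
        (hf_meas.aestronglyMeasurable.mul measurable_id.aestronglyMeasurable).restrict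
        (ae_restrict_of_forall_mem measurableSet_Ioc fun t ht => ?_)
      obtain ⟨ht1, ht2⟩ := ht
      simp only [Real.norm_eq_abs, abs_mul, abs_of_nonneg (hf_nonneg t)]
      rw [abs_of_nonneg (by linarith : (0:ℝ) ≤ -h), abs_of_nonpos ht2, mul_comm (-h) (f t)]
      exact mul_le_mul_of_nonneg_left (by linarith) (hf_nonneg t)
    have hmt_int : IntegrableOn (fun t => f t * (t - h)) (Set.Ioc h 0) := by
      have heq : (fun t => f t * (t - h)) = fun t => f t * t - h * f t := by funext t; ring
      rw [heq]
      exact hft_int.sub ((hf_int.const_mul h).integrableOn)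
    have hcomb : ∫ t in Set.Ioc h 0, f t * (t - h)
        = (∫ t in Set.Ioc h 0, f t * t) - h * ∫ t in Set.Ioc h 0, f t := by
      have heq : (fun t => f t * (t - h)) = fun t => f t * t - h * f t := by funext t; ring
      rw [heq, integral_sub hft_int ((hf_int.const_mul h).integrableOn), integral_const_mul]
    have key2 : ∫ t in Set.Ioc (-c) 0, ϱ1 * (t + c) ≤ ∫ t in Set.Ioc h 0, f t * (t - h) := by
      have hsub : Set.Ioc (-c) 0 ⊆ Set.Ioc h 0 := Set.Ioc_subset_Ioc_left hhc
      have hnn : ∀ t ∈ Set.Ioc h 0, 0 ≤ f t * (t - h) := fun t ht =>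
        mul_nonneg (hf_nonneg t) (by linarith [ht.1])
      calc ∫ t in Set.Ioc (-c) 0, ϱ1 * (t + c)
          ≤ ∫ t in Set.Ioc (-c) 0, f t * (t - h) := by
            refine setIntegral_mono_on ((continuous_const.mul
              (continuous_id.add continuous_const)).integrableOn_Ioc)
              (hmt_int.mono_set hsub) measurableSet_Ioc fun t ht => ?_
            obtain ⟨ht1, ht2⟩ := ht
            have hfl : ϱ1 ≤ f t := hf_lb t (by rw [abs_of_nonpos ht2]; linarith)
            have h1 : ϱ1 * (t + c) ≤ ϱ1 * (t - h) :=
              mul_le_mul_of_nonneg_left (by linarith) hϱ1.le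
            have h2 : ϱ1 * (t - h) ≤ f t * (t - h) :=
              mul_le_mul_of_nonneg_right hfl (by linarith)
            linarith
        _ ≤ ∫ t in Set.Ioc h 0, f t * (t - h) :=
            setIntegral_mono_set hmt_int
              (ae_restrict_of_forall_mem measurableSet_Ioc hnn)
              (Filter.Eventually.of_forall fun t ht => hsub ht)
    have hval2 : ∫ t in Set.Ioc (-c) 0, ϱ1 * (t + c) = 1/2 * ϱ1 * c^2 := by
      rw [← intervalIntegral.integral_of_le (by linarith : -c ≤ (0:ℝ))]
      rw [intervalIntegral.integral_const_mul]
      rw [intervalIntegral.integral_add intervalIntegral.intervalIntegrable_id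
        intervalIntegrable_const]
      simp
      ring
    rw [hIsplit, hIpos, hIic_split, hIlow, hImid, hlowval]
    linarith [key2, hval2, hcomb, mul_comm τ h]
end
end

section
/- In the longitudinal censored quantile regression model under conditions A1–A4 (with the errors u_{ij} having common marginal density f and the null model y_{ij} = max(0, x_{ij}'α0 + u_{ij})), let Q̄_n(α) = E[ n^{-1} Σ_{ij} { ρ_τ(y_{ij} − max(0, x_{ij}'α)) − ρ_τ(y_{ij} − max(0, x_{ij}'α0)) } ]. Then Q̄_n(α) ≥ (1/2) ϱ1 c² · n^{-1} Σ_{ij} I(x_{ij}'α0 ≥ ε0) I(|x_{ij}'(α − α0)| ≥ c) for any 0 < c < min(ε0, ϱ1); consequently, for every ε > 0, Q̄_n(α) is strictly positive, uniformly bounded below by a positive constant, for all α ∈ A with ‖α − α0‖ ≥ ε and all n sufficiently large. -/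
open MeasureTheory ProbabilityTheory Filter Finset
open scoped BigOperators RealInnerProductSpace NNReal ENNReal

noncomputable section

/-- Total sample size `n = Σ_{i<N} n_i`. -/
def tot (ni : ℕ → ℕ) (N : ℕ) : ℕ := ∑ i ∈ Finset.range N, ni i

/-!
The loss increment of one censored observation `max 0 (a₀ + t)`, when the fitted value moves from
`max 0 a₀` to `max 0 a`, splits as `δ (1{t ≤ 0} - τ)` plus a pointwise nonnegative excess, where
`δ = max 0 a - max 0 a₀` (a Knight-type identity for the check loss). Since `0` is the `τ`th
quantile of the error, the first term has mean zero. If `a₀ ≥ ε₀ > c` and `|a - a₀| ≥ c`, the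
excess is at least `c - |t|` on one half of `(-c, c)`, where the density exceeds `ϱ₁`; this gives
`ϱ₁ c² / 2` per observation, and averaging gives the first claim.

For the second claim, the weighted Gram matrices converge to the positive definite `D₁`, so by
compactness `n⁻¹ Σ I(x'α₀ ≥ ε₀) (x'δ)²` is eventually bounded below by some `m > 0`, uniformly
over `δ = α - α₀` with `α ∈ A`, `‖δ‖ ≥ ε`. The truncation
`w s² ≤ c² + L² w I(|s| ≥ c) + |s|³ / L` together with the third-moment bound of A2 then keeps
the fraction counted in the first claim above `m / (2 L²)` once `c² ≤ m / 4`.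
-/

namespace CensoredQR
open Matrix

lemma qloss_eq_mul_add_max (τ u : ℝ) : qloss τ u = τ * u + max 0 (-u) := by
  unfold qloss; split_ifs with h
  · rw [max_eq_right (by linarith)]; ring
  · rw [max_eq_left (by linarith)]; ring

lemma continuous_qloss (τ : ℝ) : Continuous (qloss τ) := by
  simp only [funext (qloss_eq_mul_add_max τ)]; fun_prop

lemma abs_qloss_sub_qloss_le (τ s t : ℝ) :
    |qloss τ s - qloss τ t| ≤ (|τ| + 1) * |s - t| := by
  have hmax : |max 0 (-s) - max 0 (-t)| ≤ |s - t| := by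
    rw [max_comm 0 (-s), max_comm 0 (-t)]
    exact (abs_max_sub_max_le_abs _ _ _).trans_eq (by rw [← abs_neg]; ring_nf)
  calc |qloss τ s - qloss τ t| = |τ * (s - t) + (max 0 (-s) - max 0 (-t))| := by
        rw [qloss_eq_mul_add_max, qloss_eq_mul_add_max]; ring_nf
    _ ≤ |τ| * |s - t| + |s - t| := by
        grw [abs_add_le, abs_mul, hmax]
    _ = (|τ| + 1) * |s - t| := by ring

def censoredLossDiff (τ a₀ a t : ℝ) : ℝ :=
  qloss τ (max 0 (a₀ + t) - max 0 a) - qloss τ (max 0 (a₀ + t) - max 0 a₀)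

def censoredExcess (a₀ a t : ℝ) : ℝ :=
  max 0 (max 0 a - max 0 (a₀ + t)) - max 0 (max 0 a₀ - max 0 (a₀ + t)) -
    (max 0 a - max 0 a₀) * (Set.Iic 0).indicator 1 t

lemma censoredLossDiff_eq_censoredExcess_add (τ a₀ a t : ℝ) :
    censoredLossDiff τ a₀ a t =
      censoredExcess a₀ a t + (max 0 a - max 0 a₀) * ((Set.Iic 0).indicator 1 t - τ) := by
  simp only [censoredLossDiff, censoredExcess, qloss_eq_mul_add_max, neg_sub]; ring

lemma censoredExcess_nonneg (a₀ a t : ℝ) : 0 ≤ censoredExcess a₀ a t := by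
  by_cases ht : t ≤ 0 <;>
    simp only [censoredExcess, Set.indicator, Set.mem_Iic, ht, if_true, if_false, Pi.one_apply,
      max_def] <;>
    split_ifs <;> linarith

lemma sub_le_censoredExcess {a₀ a c t : ℝ} (ha₀ : 0 < a₀) (ha : a₀ + c ≤ a) (ht : 0 < t) :
    c - t ≤ censoredExcess a₀ a t := by
  simp only [censoredExcess, Set.indicator_of_notMem (show t ∉ Set.Iic 0 from not_le.2 ht),
    max_def]
  split_ifs <;> linarith

lemma add_le_censoredExcess {a₀ a c t : ℝ} (hc : c ≤ a₀) (ha : a ≤ a₀ - c) (ht : -c < t)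
    (ht0 : t ≤ 0) : c + t ≤ censoredExcess a₀ a t := by
  simp only [censoredExcess, Set.indicator_of_mem (show t ∈ Set.Iic 0 from ht0), Pi.one_apply,
    max_def]
  split_ifs <;> linarith

lemma continuous_censoredLossDiff (τ a₀ a : ℝ) : Continuous (censoredLossDiff τ a₀ a) := by
  unfold censoredLossDiff; have := continuous_qloss τ; fun_prop

section Law

variable {μ : Measure ℝ}

lemma integrable_censoredLossDiff [IsFiniteMeasure μ] (τ a₀ a : ℝ) :
    Integrable (censoredLossDiff τ a₀ a) μ := by
  refine .of_bound (continuous_censoredLossDiff τ a₀ a).aestronglyMeasurable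
    ((|τ| + 1) * |max 0 a₀ - max 0 a|) (ae_of_all _ fun t => ?_)
  rw [Real.norm_eq_abs, censoredLossDiff]
  exact (abs_qloss_sub_qloss_le ..).trans_eq (by rw [sub_sub_sub_cancel_left])

lemma integrable_indicator_Iic_one [IsFiniteMeasure μ] :
    Integrable ((Set.Iic (0 : ℝ)).indicator (1 : ℝ → ℝ)) μ :=
  (integrable_const (1 : ℝ)).indicator measurableSet_Iic

lemma integrable_censoredExcess [IsFiniteMeasure μ] (a₀ a : ℝ) :
    Integrable (censoredExcess a₀ a) μ :=
  ((integrable_censoredLossDiff 0 a₀ a).sub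
    (integrable_indicator_Iic_one.const_mul (max 0 a - max 0 a₀))).congr
    (ae_of_all _ fun t => by simp [censoredLossDiff_eq_censoredExcess_add])

variable [IsProbabilityMeasure μ] {τ : ℝ} (hτ : μ.real (Set.Iic 0) = τ)
include hτ

lemma integral_censoredLossDiff_eq_censoredExcess_add (a₀ a : ℝ) :
    ∫ t, censoredLossDiff τ a₀ a t ∂μ = ∫ t, censoredExcess a₀ a t ∂μ := by
  have hscore : Integrable (fun t => (max 0 a - max 0 a₀) * ((Set.Iic 0).indicator 1 t - τ)) μ :=
    (integrable_indicator_Iic_one.sub (integrable_const τ)).const_mul _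
  simp only [censoredLossDiff_eq_censoredExcess_add]
  rw [integral_add (integrable_censoredExcess a₀ a) hscore, integral_const_mul,
    integral_sub integrable_indicator_Iic_one (integrable_const τ),
    integral_indicator_one measurableSet_Iic, hτ]
  simp

lemma integral_censoredLossDiff_nonneg (a₀ a : ℝ) : 0 ≤ ∫ t, censoredLossDiff τ a₀ a t ∂μ := by
  rw [integral_censoredLossDiff_eq_censoredExcess_add hτ]
  exact integral_nonneg (censoredExcess_nonneg a₀ a)

lemma setIntegral_le_integral_censoredLossDiff {a₀ a : ℝ} {s : Set ℝ} (hs : MeasurableSet s)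
    {g : ℝ → ℝ} (hg : IntegrableOn g s μ) (hgs : ∀ t ∈ s, g t ≤ censoredExcess a₀ a t) :
    ∫ t in s, g t ∂μ ≤ ∫ t, censoredLossDiff τ a₀ a t ∂μ := by
  rw [integral_censoredLossDiff_eq_censoredExcess_add hτ]
  calc ∫ t in s, g t ∂μ ≤ ∫ t in s, censoredExcess a₀ a t ∂μ :=
        setIntegral_mono_on hg (integrable_censoredExcess a₀ a).integrableOn hs hgs
    _ ≤ ∫ t, censoredExcess a₀ a t ∂μ :=
        setIntegral_le_integral (integrable_censoredExcess a₀ a)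
          (ae_of_all _ (censoredExcess_nonneg a₀ a))

end Law

lemma mul_setIntegral_le_setIntegral_withDensity {X : Type*} [MeasurableSpace X] {ν : Measure X}
    {f g : X → ℝ} {s : Set X} (hs : MeasurableSet s) {ϱ : ℝ} (hϱ : 0 ≤ ϱ) (hf : ∀ x ∈ s, ϱ ≤ f x)
    (hg : ∀ x ∈ s, 0 ≤ g x)
    (hgi : IntegrableOn g s (ν.withDensity fun x => ENNReal.ofReal (f x))) :
    ϱ * ∫ x in s, g x ∂ν ≤ ∫ x in s, g x ∂(ν.withDensity fun x => ENNReal.ofReal (f x)) := by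
  have hle : ENNReal.ofReal ϱ • ν.restrict s ≤
      (ν.withDensity fun x => ENNReal.ofReal (f x)).restrict s := by
    rw [restrict_withDensity hs, ← withDensity_const]
    exact withDensity_mono ((ae_restrict_iff' hs).2 (ae_of_all _ fun x hx =>
      ENNReal.ofReal_le_ofReal (hf x hx)))
  calc ϱ * ∫ x in s, g x ∂ν = ∫ x, g x ∂(ENNReal.ofReal ϱ • ν.restrict s) := by
        rw [integral_smul_measure, ENNReal.toReal_ofReal hϱ, smul_eq_mul]
    _ ≤ _ := integral_mono_measure hle ((ae_restrict_iff' hs).2 (ae_of_all _ hg)) hgi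

lemma integral_Ioc_zero_sub (c : ℝ) (hc : 0 ≤ c) : ∫ t in Set.Ioc 0 c, (c - t) = c ^ 2 / 2 := by
  rw [← intervalIntegral.integral_of_le hc, intervalIntegral.integral_sub intervalIntegrable_const
    intervalIntegral.intervalIntegrable_id, intervalIntegral.integral_const, integral_id,
    smul_eq_mul]
  ring

lemma integral_Ioc_add_zero (c : ℝ) (hc : 0 ≤ c) : ∫ t in Set.Ioc (-c) 0, (c + t) = c ^ 2 / 2 := by
  rw [← intervalIntegral.integral_of_le (by linarith), intervalIntegral.integral_add
    intervalIntegrable_const intervalIntegral.intervalIntegrable_id,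
    intervalIntegral.integral_const, integral_id, smul_eq_mul]
  ring

lemma measureReal_eq_setIntegral_of_eq_withDensity {X : Type*} [MeasurableSpace X]
    {μ ν : Measure X} {f : X → ℝ} (hf : Measurable f) (hf₀ : ∀ x, 0 ≤ f x)
    (hμ : μ = ν.withDensity fun x => ENNReal.ofReal (f x)) {s : Set X} (hs : MeasurableSet s) :
    μ.real s = ∫ x in s, f x ∂ν := by
  rw [integral_eq_lintegral_of_nonneg_ae (ae_of_all _ hf₀) hf.aestronglyMeasurable, hμ,
    measureReal_def, withDensity_apply _ hs]

section Density

variable {μ : Measure ℝ} [IsProbabilityMeasure μ] {f : ℝ → ℝ}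
  (hμ : μ = volume.withDensity fun t => ENNReal.ofReal (f t)) {τ : ℝ}
  (hτ : μ.real (Set.Iic 0) = τ) {ϱ c : ℝ} (hf : ∀ t, |t| < ϱ → ϱ < f t) (hc : 0 < c)
  (hcϱ : c < ϱ)
include hμ hτ hf hc hcϱ

theorem half_mul_sq_le_integral_censoredLossDiff {a₀ a : ℝ} (hca₀ : c ≤ a₀) (hca : c ≤ |a - a₀|) :
    1 / 2 * ϱ * c ^ 2 ≤ ∫ t, censoredLossDiff τ a₀ a t ∂μ := by
  have key : ∀ (s : Set ℝ) (g : ℝ → ℝ), MeasurableSet s → s ⊆ Set.Icc (-c) c → Continuous g →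
      (∀ t ∈ s, 0 ≤ g t) → (∀ t ∈ s, g t ≤ censoredExcess a₀ a t) →
      ∫ t in s, g t = c ^ 2 / 2 → 1 / 2 * ϱ * c ^ 2 ≤ ∫ t, censoredLossDiff τ a₀ a t ∂μ := by
    intro s g hs hsc hg hg₀ hgΔ hgc
    have hgi : IntegrableOn g s μ := hg.integrableOn_Icc.mono_set hsc
    calc 1 / 2 * ϱ * c ^ 2 = ϱ * ∫ t in s, g t := by rw [hgc]; ring
      _ ≤ ∫ t in s, g t ∂μ := by
        rw [hμ] at hgi ⊢
        exact mul_setIntegral_le_setIntegral_withDensity hs (hc.trans hcϱ).le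
          (fun t ht => (hf t ((abs_le.2 (hsc ht)).trans_lt hcϱ)).le) hg₀ hgi
      _ ≤ ∫ t, censoredLossDiff τ a₀ a t ∂μ :=
        setIntegral_le_integral_censoredLossDiff hτ hs hgi hgΔ
  rcases le_abs'.1 hca with h | h
  · exact key (Set.Ioc (-c) 0) (fun t => c + t) measurableSet_Ioc
      (fun t ht => ⟨ht.1.le, by linarith [ht.2]⟩) (by fun_prop) (fun t ht => by linarith [ht.1])
      (fun t ht => add_le_censoredExcess hca₀ (by linarith) ht.1 ht.2)
      (integral_Ioc_add_zero c hc.le)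
  · exact key (Set.Ioc 0 c) (fun t => c - t) measurableSet_Ioc
      (fun t ht => ⟨by linarith [ht.1], ht.2⟩) (by fun_prop) (fun t ht => by linarith [ht.2])
      (fun t ht => sub_le_censoredExcess (hc.trans_le hca₀) (by linarith) ht.1)
      (integral_Ioc_zero_sub c hc.le)

theorem indicator_mul_le_integral_censoredLossDiff {ε₀ : ℝ} (hcε : c < ε₀) (a₀ a : ℝ) :
    1 / 2 * ϱ * c ^ 2 * ((if ε₀ ≤ a₀ then 1 else 0) * if c ≤ |a - a₀| then 1 else 0) ≤
      ∫ t, censoredLossDiff τ a₀ a t ∂μ := by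
  split_ifs with h₁ h₂
  · simpa using half_mul_sq_le_integral_censoredLossDiff hμ hτ hf hc hcϱ (hcε.le.trans h₁) h₂
  all_goals simpa using integral_censoredLossDiff_nonneg hτ a₀ a

end Density

def empMean (ni : ℕ → ℕ) (N : ℕ) (g : (i : ℕ) → Fin (ni i) → ℝ) : ℝ :=
  (tot ni N : ℝ)⁻¹ * ∑ i ∈ range N, ∑ j : Fin (ni i), g i j

section EmpMean

variable {ni : ℕ → ℕ} {N : ℕ}

lemma empMean_mono {g h : (i : ℕ) → Fin (ni i) → ℝ} (hgh : ∀ i j, g i j ≤ h i j) :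
    empMean ni N g ≤ empMean ni N h :=
  mul_le_mul_of_nonneg_left (sum_le_sum fun i _ => sum_le_sum fun j _ => hgh i j) (by positivity)

lemma empMean_add (g h : (i : ℕ) → Fin (ni i) → ℝ) :
    empMean ni N (fun i j => g i j + h i j) = empMean ni N g + empMean ni N h := by
  simp only [empMean, sum_add_distrib, mul_add]

lemma empMean_const_mul (c : ℝ) (g : (i : ℕ) → Fin (ni i) → ℝ) :
    empMean ni N (fun i j => c * g i j) = c * empMean ni N g := by
  simp only [empMean, ← mul_sum]; ring

lemma empMean_const_le {c : ℝ} (hc : 0 ≤ c) : empMean ni N (fun _ _ => c) ≤ c := by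
  rcases Nat.eq_zero_or_pos (tot ni N) with h | h
  · simp [empMean, h, hc]
  · have hsum : ∑ i ∈ range N, ∑ _j : Fin (ni i), c = (tot ni N : ℝ) * c := by
      simp [tot, sum_mul]
    rw [empMean, hsum, inv_mul_cancel_left₀ (by positivity)]

lemma dotProduct_mulVec_empMean {p : ℕ} (S : (i : ℕ) → Fin (ni i) → Prop)
    [∀ i j, Decidable (S i j)] (x : (i : ℕ) → Fin (ni i) → EuclideanSpace ℝ (Fin p))
    (v : EuclideanSpace ℝ (Fin p)) :
    v.ofLp ⬝ᵥ (Matrix.of (fun a b => empMean ni N fun i j =>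
        if S i j then x i j a * x i j b else 0) *ᵥ v.ofLp) =
      empMean ni N fun i j => (if S i j then 1 else 0) * ⟪x i j, v⟫ ^ 2 := by
  have hM : Matrix.of (fun a b => empMean ni N fun i j =>
        if S i j then x i j a * x i j b else 0) =
      (tot ni N : ℝ)⁻¹ • ∑ i ∈ range N, ∑ j : Fin (ni i),
        if S i j then vecMulVec (x i j).ofLp (x i j).ofLp else 0 := by
    ext a b
    simp only [empMean, of_apply, Matrix.smul_apply, Matrix.sum_apply,
      apply_ite (fun M : Matrix (Fin p) (Fin p) ℝ => M a b), vecMulVec_apply, Matrix.zero_apply,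
      smul_eq_mul]
  rw [hM, smul_mulVec, sum_mulVec, dotProduct_smul]
  simp only [sum_mulVec, dotProduct_sum, empMean, smul_eq_mul]
  congr 1
  refine sum_congr rfl fun i _ => sum_congr rfl fun j _ => ?_
  split_ifs
  · rw [vecMulVec_mulVec, EuclideanSpace.inner_eq_star_dotProduct]
    simp only [dotProduct_comm, op_smul_eq_smul, dotProduct_smul, smul_eq_mul, star_trivial]
    ring
  · simp

lemma mul_sq_le_add_mul_indicator {w s c L : ℝ} (hw₀ : 0 ≤ w) (hw₁ : w ≤ 1) (hL : 0 < L) :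
    w * s ^ 2 ≤ c ^ 2 + L ^ 2 * (w * if c ≤ |s| then 1 else 0) + |s| ^ 3 / L := by
  have hs : w * s ^ 2 ≤ |s| ^ 2 := by rw [sq_abs]; nlinarith [sq_nonneg s]
  have h3 : 0 ≤ |s| ^ 3 / L := by positivity
  split_ifs with hcs
  · rcases le_or_gt |s| L with hsL | hsL
    · have : w * s ^ 2 ≤ w * L ^ 2 := by
        rw [← sq_abs]; exact mul_le_mul_of_nonneg_left (pow_le_pow_left₀ (abs_nonneg s) hsL 2) hw₀
      nlinarith [sq_nonneg c]
    · have : |s| ^ 2 ≤ |s| ^ 3 / L := by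
        rw [le_div_iff₀ hL]; nlinarith [abs_nonneg s, sq_nonneg |s|]
      nlinarith [sq_nonneg c, sq_nonneg L]
  · have : |s| ^ 2 ≤ c ^ 2 := pow_le_pow_left₀ (abs_nonneg s) (not_le.1 hcs).le 2
    nlinarith

lemma le_empMean_mul_indicator {w s : (i : ℕ) → Fin (ni i) → ℝ}
    (hw : ∀ i j, 0 ≤ w i j ∧ w i j ≤ 1) {m B c L : ℝ} (hL : 0 < L)
    (hc : c ^ 2 ≤ m / 4) (hBL : 4 * B ≤ m * L)
    (h₂ : m ≤ empMean ni N fun i j => w i j * s i j ^ 2)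
    (h₃ : (empMean ni N fun i j => |s i j| ^ 3) ≤ B) :
    m / (2 * L ^ 2) ≤ empMean ni N fun i j => w i j * if c ≤ |s i j| then 1 else 0 := by
  set F := empMean ni N fun i j => w i j * if c ≤ |s i j| then 1 else 0
  have htrunc : m ≤ c ^ 2 + L ^ 2 * F + B / L :=
    calc m ≤ empMean ni N fun i j => w i j * s i j ^ 2 := h₂
      _ ≤ empMean ni N fun i j =>
          c ^ 2 + L ^ 2 * (w i j * if c ≤ |s i j| then 1 else 0) + |s i j| ^ 3 / L :=
        empMean_mono fun i j => mul_sq_le_add_mul_indicator (hw i j).1 (hw i j).2 hL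
      _ = (empMean ni N fun _ _ => c ^ 2) + L ^ 2 * F +
          L⁻¹ * empMean ni N fun i j => |s i j| ^ 3 := by
        simp only [empMean_add, empMean_const_mul, div_eq_inv_mul]; rfl
      _ ≤ c ^ 2 + L ^ 2 * F + L⁻¹ * B := by
        gcongr
        exact empMean_const_le (sq_nonneg c)
      _ = c ^ 2 + L ^ 2 * F + B / L := by ring
  have hBL' : B / L ≤ m / 4 := by rw [div_le_iff₀ hL]; linarith
  rw [div_le_iff₀ (by positivity)]
  nlinarith

end EmpMean

lemma exists_pos_eventually_forall_le_dotProduct_mulVec {ι β : Type*} [Fintype ι] {l : Filter β}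
    {D : β → Matrix ι ι ℝ} {D₀ : Matrix ι ι ℝ} (hD : Tendsto D l (nhds D₀)) (hD₀ : D₀.PosDef)
    {K : Set (ι → ℝ)} (hK : IsCompact K) (hK₀ : 0 ∉ K) :
    ∃ m > 0, ∀ᶠ b in l, ∀ v ∈ K, m ≤ v ⬝ᵥ (D b *ᵥ v) := by
  set q : Matrix ι ι ℝ × (ι → ℝ) → ℝ := fun z => z.2 ⬝ᵥ (z.1 *ᵥ z.2)
  have hq : Continuous q := by fun_prop
  obtain ⟨m, hm, hmK⟩ := hK.exists_forall_le' (f := fun v => q (D₀, v))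
    (hq.comp (Continuous.prodMk_right D₀)).continuousOn (a := 0) fun v hv => by
      simpa using hD₀.dotProduct_mulVec_pos (x := v) (ne_of_mem_of_not_mem hv hK₀)
  have hev : ∀ᶠ M in nhds D₀, ∀ v ∈ K, m / 2 < q (M, v) :=
    hK.eventually_forall_of_forall_eventually fun v hv =>
      hq.continuousAt.eventually (lt_mem_nhds (by linarith [hmK v hv]))
  exact ⟨m / 2, by positivity, (hD.eventually hev).mono fun b hb v hv => (hb v hv).le⟩

section Design

variable {p : ℕ} {ni : ℕ → ℕ} (S : (i : ℕ) → Fin (ni i) → Prop) [∀ i j, Decidable (S i j)]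
  {x : (i : ℕ) → Fin (ni i) → EuclideanSpace ℝ (Fin p)} {A : Set (EuclideanSpace ℝ (Fin p))}
  (hA : IsCompact A) (α₀ : EuclideanSpace ℝ (Fin p)) {D : Matrix (Fin p) (Fin p) ℝ}
  (hD : Tendsto (fun N => Matrix.of fun a b => empMean ni N fun i j =>
    if S i j then x i j a * x i j b else 0) atTop (nhds D)) (hDpos : D.PosDef)
include hA hD hDpos

lemma exists_pos_eventually_le_empMean_sq {ε : ℝ} (hε : 0 < ε) :
    ∃ m > 0, ∀ᶠ N in atTop, ∀ α ∈ A, ε ≤ ‖α - α₀‖ →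
      m ≤ empMean ni N fun i j => (if S i j then 1 else 0) * ⟪x i j, α - α₀⟫ ^ 2 := by
  set K := (fun α => (α - α₀).ofLp) '' (A ∩ {α | ε ≤ ‖α - α₀‖})
  have hK : IsCompact K :=
    (hA.inter_right (isClosed_le continuous_const (by fun_prop))).image (by fun_prop)
  have hK₀ : (0 : Fin p → ℝ) ∉ K := by
    rintro ⟨α, ⟨-, hα⟩, h₀⟩
    have hα' : ε ≤ ‖α - α₀‖ := hα
    rw [(WithLp.ofLp_eq_zero 2).1 h₀, norm_zero] at hα'
    exact hα'.not_gt hε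
  obtain ⟨m, hm, hev⟩ := exists_pos_eventually_forall_le_dotProduct_mulVec hD hDpos hK hK₀
  refine ⟨m, hm, hev.mono fun N hN α hα hαε => ?_⟩
  rw [← dotProduct_mulVec_empMean]
  exact hN _ ⟨α, ⟨hα, hαε⟩, rfl⟩

theorem exists_pos_eventually_le_empMean_indicator {r : (i : ℕ) → Fin (ni i) → ℝ}
    (hxr : ∀ i j, ‖x i j‖ ≤ r i j) {C : ℝ}
    (hC : ∀ᶠ N in atTop, (empMean ni N fun i j => r i j ^ 3) ≤ C) {b ε : ℝ} (hb : 0 < b)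
    (hε : 0 < ε) :
    ∃ c, 0 < c ∧ c < b ∧ ∃ κ > 0, ∀ᶠ N in atTop, ∀ α ∈ A, ε ≤ ‖α - α₀‖ →
      κ ≤ empMean ni N fun i j =>
        (if S i j then 1 else 0) * if c ≤ |⟪x i j, α - α₀⟫| then 1 else 0 := by
  obtain ⟨m, hm, hev⟩ := exists_pos_eventually_le_empMean_sq S hA α₀ hD hDpos hε
  obtain ⟨R, hR⟩ := hA.isBounded.subset_closedBall α₀
  set L := max 1 (4 * (R ^ 3 * C) / m)
  have hL : 0 < L := lt_max_of_lt_left one_pos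
  have hBL : 4 * (R ^ 3 * C) ≤ m * L := by
    rw [← div_le_iff₀' hm]; exact le_max_right _ _
  set c := min (b / 2) √(m / 4)
  have hc : 0 < c := lt_min (half_pos hb) (Real.sqrt_pos.2 (by positivity))
  have hc₂ : c ^ 2 ≤ m / 4 :=
    (pow_le_pow_left₀ hc.le (min_le_right _ _) 2).trans (Real.sq_sqrt (by positivity)).le
  refine ⟨c, hc, (min_le_left _ _).trans_lt (half_lt_self hb), m / (2 * L ^ 2), by positivity,
    (hev.and hC).mono fun N ⟨hm₂, hC₃⟩ α hα hαε => ?_⟩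
  have hδ : ‖α - α₀‖ ≤ R := by simpa [dist_eq_norm] using hR hα
  have hR₀ : 0 ≤ R := (norm_nonneg _).trans hδ
  have h₃ : (empMean ni N fun i j => |⟪x i j, α - α₀⟫| ^ 3) ≤ R ^ 3 * C :=
    calc (empMean ni N fun i j => |⟪x i j, α - α₀⟫| ^ 3)
        ≤ empMean ni N fun i j => R ^ 3 * r i j ^ 3 := empMean_mono fun i j => by
          rw [← mul_pow]
          refine pow_le_pow_left₀ (abs_nonneg _) ?_ 3
          calc |⟪x i j, α - α₀⟫| ≤ ‖x i j‖ * ‖α - α₀‖ := abs_real_inner_le_norm _ _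
            _ ≤ r i j * R :=
              mul_le_mul (hxr i j) hδ (norm_nonneg _) ((norm_nonneg _).trans (hxr i j))
            _ = R * r i j := mul_comm _ _
      _ = R ^ 3 * empMean ni N fun i j => r i j ^ 3 := empMean_const_mul _ _
      _ ≤ R ^ 3 * C := by gcongr
  exact le_empMean_mul_indicator (fun i j => by split_ifs <;> norm_num) hL hc₂ hBL
    (hm₂ α hα hαε) h₃

end Design

lemma integral_empMean {ni : ℕ → ℕ} {N : ℕ} {Ω : Type*} [MeasurableSpace Ω] {P : Measure Ω}
    {F : (i : ℕ) → Fin (ni i) → Ω → ℝ} (hF : ∀ i j, Integrable (F i j) P) :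
    ∫ ω, (empMean ni N fun i j => F i j ω) ∂P = empMean ni N fun i j => ∫ ω, F i j ω ∂P := by
  simp only [empMean]
  rw [integral_const_mul, integral_finsetSum _ fun i _ => integrable_finsetSum _ fun j _ => hF i j]
  exact congrArg _ (sum_congr rfl fun i _ => integral_finsetSum _ fun j _ => hF i j)

theorem half_mul_sq_mul_empMean_le_integral_empMean {Ω : Type*} [MeasurableSpace Ω]
    {P : Measure Ω} [IsProbabilityMeasure P] {ni : ℕ → ℕ} {u : (i : ℕ) → Fin (ni i) → Ω → ℝ}
    (hu : ∀ i j, Measurable (u i j)) {f : ℝ → ℝ} (hf : Measurable f) (hf₀ : ∀ t, 0 ≤ f t)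
    (hlaw : ∀ i j, P.map (u i j) = volume.withDensity fun t => ENNReal.ofReal (f t)) {τ : ℝ}
    (hτ : ∫ t in Set.Iic 0, f t = τ) {ϱ c ε₀ : ℝ} (hf_lb : ∀ t, |t| < ϱ → ϱ < f t) (hc : 0 < c)
    (hcε : c < ε₀) (hcϱ : c < ϱ) (N : ℕ) (a₀ a : (i : ℕ) → Fin (ni i) → ℝ) :
    1 / 2 * ϱ * c ^ 2 * (empMean ni N fun i j =>
        (if ε₀ ≤ a₀ i j then 1 else 0) * if c ≤ |a i j - a₀ i j| then 1 else 0) ≤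
      ∫ ω, (empMean ni N fun i j => censoredLossDiff τ (a₀ i j) (a i j) (u i j ω)) ∂P := by
  rw [integral_empMean (F := fun i j ω => censoredLossDiff τ (a₀ i j) (a i j) (u i j ω))
      fun i j => (integrable_censoredLossDiff ..).comp_measurable (hu i j),
    ← empMean_const_mul]
  refine empMean_mono fun i j => ?_
  have := Measure.isProbabilityMeasure_map (μ := P) (hu i j).aemeasurable
  rw [← integral_map (hu i j).aemeasurable
    (continuous_censoredLossDiff ..).aestronglyMeasurable]
  exact indicator_mul_le_integral_censoredLossDiff (hlaw i j)
    (by rw [measureReal_eq_setIntegral_of_eq_withDensity hf hf₀ (hlaw i j) measurableSet_Iic, hτ])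
    hf_lb hc hcϱ hcε _ _

end CensoredQR

open CensoredQR

theorem censored_qr_population_objective_lower_bound_general
    {Ω : Type*} [MeasurableSpace Ω] (P : Measure Ω) [IsProbabilityMeasure P]
    (p q : ℕ) (τ : ℝ)
    -- longitudinal design: subject i has `ni i` repeated measurements, `ni` bounded
    (ni : ℕ → ℕ)
    (x : (i : ℕ) → Fin (ni i) → EuclideanSpace ℝ (Fin p))
    (z : (i : ℕ) → Fin (ni i) → EuclideanSpace ℝ (Fin q))
    -- random errors: independent across subjects (possibly dependent within a subject)
    (u : (i : ℕ) → Fin (ni i) → Ω → ℝ)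
    (hu_meas : ∀ i j, Measurable (u i j))
    -- condition A4: common marginal Lebesgue density f, Lipschitz near 0, bounded above,
    -- bounded below near 0, with τth quantile equal to 0
    (f : ℝ → ℝ) (hf_meas : Measurable f) (hf_nonneg : ∀ t, 0 ≤ f t)
    (hmarginal : ∀ i j, P.map (u i j) = volume.withDensity fun t => ENNReal.ofReal (f t))
    (hquantile : ∫ t in Set.Iic (0:ℝ), f t = τ)
    (ϱ1 : ℝ) (hϱ1 : 0 < ϱ1)
    (hf_lb : ∀ t, |t| < ϱ1 → ϱ1 < f t)
    -- condition A1: α0 is interior to the compact parameter space A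
    (A : Set (EuclideanSpace ℝ (Fin p))) (hA_cpt : IsCompact A)
    (α0 : EuclideanSpace ℝ (Fin p))
    -- condition A2
    (hA2b : ∃ C > (0:ℝ), ∀ N, 1 ≤ N →
        (tot ni N : ℝ)⁻¹ *
          ∑ i ∈ Finset.range N, ∑ j : Fin (ni i),
            Real.sqrt (‖x i j‖ ^ 2 + ‖z i j‖ ^ 2) ^ 3 ≤ C)
    -- condition A3
    (D1 : Matrix (Fin p) (Fin p) ℝ) (hD1 : D1.PosDef)
    (ε0 : ℝ) (hε0 : 0 < ε0)
    (hA3 : (∀ α : EuclideanSpace ℝ (Fin p), α ≠ 0 →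
        0 < Filter.liminf (fun N => (tot ni N : ℝ)⁻¹ *
              ∑ i ∈ Finset.range N, ∑ j : Fin (ni i),
                (if ε0 ≤ |⟪x i j, α⟫| then (1:ℝ) else 0)) Filter.atTop) ∧
      Filter.Tendsto (fun N => Matrix.of fun a b => (tot ni N : ℝ)⁻¹ *
            ∑ i ∈ Finset.range N, ∑ j : Fin (ni i),
              (if ε0 ≤ ⟪x i j, α0⟫ then x i j a * x i j b else 0))
        Filter.atTop (nhds D1))
    -- null model responses
    (y : (i : ℕ) → Fin (ni i) → Ω → ℝ)
    (hy : ∀ i j ω, y i j ω = max 0 (⟪x i j, α0⟫ + u i j ω))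
    -- the population objective Q̄_n
    (Qbar : ℕ → EuclideanSpace ℝ (Fin p) → ℝ)
    (hQbar : ∀ N α, Qbar N α = ∫ ω, ((tot ni N : ℝ)⁻¹ *
        ∑ i ∈ Finset.range N, ∑ j : Fin (ni i),
          (qloss τ (y i j ω - max 0 ⟪x i j, α⟫) -
            qloss τ (y i j ω - max 0 ⟪x i j, α0⟫))) ∂P) :
    -- conclusion
    (∀ c : ℝ, 0 < c → c < min ε0 ϱ1 → ∀ N, ∀ α : EuclideanSpace ℝ (Fin p),
      (1/2) * ϱ1 * c ^ 2 *
          ((tot ni N : ℝ)⁻¹ * ∑ i ∈ Finset.range N, ∑ j : Fin (ni i),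
            (if ε0 ≤ ⟪x i j, α0⟫ then (1:ℝ) else 0) *
              (if c ≤ |⟪x i j, α - α0⟫| then (1:ℝ) else 0)) ≤ Qbar N α) ∧
    (∀ ε : ℝ, 0 < ε → ∃ c0 > (0:ℝ), ∃ N0 : ℕ, ∀ N, N0 ≤ N →
      ∀ α ∈ A, ε ≤ ‖α - α0‖ → c0 ≤ Qbar N α) := by
  have hlower : ∀ c : ℝ, 0 < c → c < min ε0 ϱ1 → ∀ N α,
      1 / 2 * ϱ1 * c ^ 2 * (empMean ni N fun i j =>
        (if ε0 ≤ ⟪x i j, α0⟫ then 1 else 0) * if c ≤ |⟪x i j, α - α0⟫| then 1 else 0) ≤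
        Qbar N α := by
    intro c hc hcb N α
    have hy' : y = fun i j ω => max 0 (⟪x i j, α0⟫ + u i j ω) := by ext; exact hy ..
    rw [hQbar, hy']
    simp only [inner_sub_right]
    exact half_mul_sq_mul_empMean_le_integral_empMean hu_meas hf_meas hf_nonneg hmarginal
      hquantile hf_lb hc (hcb.trans_le (min_le_left _ _)) (hcb.trans_le (min_le_right _ _)) N
      (fun i j => ⟪x i j, α0⟫) (fun i j => ⟪x i j, α⟫)
  refine ⟨hlower, fun ε hε => ?_⟩
  obtain ⟨C, -, hC⟩ := hA2b
  obtain ⟨c, hc, hcb, κ, hκ, hev⟩ := exists_pos_eventually_le_empMean_indicator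
    (fun i j => ε0 ≤ ⟪x i j, α0⟫) hA_cpt α0 hA3.2 hD1
    (r := fun i j => √(‖x i j‖ ^ 2 + ‖z i j‖ ^ 2))
    (fun i j => Real.le_sqrt_of_sq_le (le_add_of_nonneg_right (sq_nonneg _)))
    (eventually_atTop.2 ⟨1, hC⟩) (lt_min hε0 hϱ1) hε
  obtain ⟨N0, hN0⟩ := eventually_atTop.1 hev
  exact ⟨1 / 2 * ϱ1 * c ^ 2 * κ, by positivity, N0, fun N hN α hα hαε =>
    (mul_le_mul_of_nonneg_left (hN0 N hN α hα hαε) (by positivity)).trans (hlower c hc hcb N α)⟩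

/-- under conditions A1–A4 and the null model, the population objective
`Q̄_n(α) = E[n⁻¹ Σ_{ij} {ρ_τ(y_{ij} − max(0, x_{ij}'α)) − ρ_τ(y_{ij} − max(0, x_{ij}'α0))}]`
satisfies `Q̄_n(α) ≥ ½ ϱ1 c² n⁻¹ Σ_{ij} I(x_{ij}'α0 ≥ ε0) I(|x_{ij}'(α−α0)| ≥ c)` for any
`0 < c < min(ε0, ϱ1)`; consequently for every `ε > 0` it is uniformly bounded below by a
positive constant over `α ∈ A` with `‖α − α0‖ ≥ ε`, for all `n` sufficiently large. -/
theorem censored_qr_population_objective_lower_bound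
    {Ω : Type*} [MeasurableSpace Ω] (P : Measure Ω) [IsProbabilityMeasure P]
    (p q : ℕ) (τ : ℝ) (hτ : τ ∈ Set.Ioo (0:ℝ) 1)
    -- longitudinal design: subject i has `ni i` repeated measurements, `ni` bounded
    (ni : ℕ → ℕ) (hni_pos : ∀ i, 0 < ni i) (M : ℕ) (hni_bdd : ∀ i, ni i ≤ M)
    (x : (i : ℕ) → Fin (ni i) → EuclideanSpace ℝ (Fin p))
    (z : (i : ℕ) → Fin (ni i) → EuclideanSpace ℝ (Fin q))
    -- random errors: independent across subjects (possibly dependent within a subject)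
    (u : (i : ℕ) → Fin (ni i) → Ω → ℝ)
    (hu_meas : ∀ i j, Measurable (u i j))
    (hu_indep : iIndepFun
      (fun i ω => fun j : Fin (ni i) => u i j ω) P)
    -- condition A4: common marginal Lebesgue density f, Lipschitz near 0, bounded above,
    -- bounded below near 0, with τth quantile equal to 0
    (f : ℝ → ℝ) (hf_meas : Measurable f) (hf_nonneg : ∀ t, 0 ≤ f t)
    (hmarginal : ∀ i j, P.map (u i j) = volume.withDensity fun t => ENNReal.ofReal (f t))
    (hquantile : ∫ t in Set.Iic (0:ℝ), f t = τ)
    (hf_lip : ∃ K : ℝ≥0, ∃ ε > 0, LipschitzOnWith K f (Metric.ball (0:ℝ) ε))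
    (ϱ1 ϱ2 : ℝ) (hϱ1 : 0 < ϱ1) (hϱ2 : 0 < ϱ2)
    (hf_ub : ∀ t, f t < ϱ2) (hf_lb : ∀ t, |t| < ϱ1 → ϱ1 < f t)
    -- condition A1: α0 is interior to the compact parameter space A
    (A : Set (EuclideanSpace ℝ (Fin p))) (hA_cpt : IsCompact A)
    (α0 : EuclideanSpace ℝ (Fin p)) (hα0 : α0 ∈ interior A)
    (β0 : EuclideanSpace ℝ (Fin q))
    -- condition A2
    (hA2a : ∃ C > (0:ℝ), ∀ N, 1 ≤ N → ∀ i ∈ Finset.range N, ∀ j : Fin (ni i),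
        Real.sqrt (‖x i j‖ ^ 2 + ‖z i j‖ ^ 2) ≤ C * (tot ni N : ℝ) ^ ((1:ℝ)/4))
    (hA2b : ∃ C > (0:ℝ), ∀ N, 1 ≤ N →
        (tot ni N : ℝ)⁻¹ *
          ∑ i ∈ Finset.range N, ∑ j : Fin (ni i),
            Real.sqrt (‖x i j‖ ^ 2 + ‖z i j‖ ^ 2) ^ 3 ≤ C)
    -- condition A3
    (D1 : Matrix (Fin p) (Fin p) ℝ) (hD1 : D1.PosDef)
    (ε0 : ℝ) (hε0 : 0 < ε0)
    (hA3 : (∀ α : EuclideanSpace ℝ (Fin p), α ≠ 0 →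
        0 < Filter.liminf (fun N => (tot ni N : ℝ)⁻¹ *
              ∑ i ∈ Finset.range N, ∑ j : Fin (ni i),
                (if ε0 ≤ |⟪x i j, α⟫| then (1:ℝ) else 0)) Filter.atTop) ∧
      Filter.Tendsto (fun N => Matrix.of fun a b => (tot ni N : ℝ)⁻¹ *
            ∑ i ∈ Finset.range N, ∑ j : Fin (ni i),
              (if ε0 ≤ ⟪x i j, α0⟫ then x i j a * x i j b else 0))
        Filter.atTop (nhds D1))
    -- null model responses
    (y : (i : ℕ) → Fin (ni i) → Ω → ℝ)
    (hy : ∀ i j ω, y i j ω = max 0 (⟪x i j, α0⟫ + u i j ω))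
    -- the population objective Q̄_n
    (Qbar : ℕ → EuclideanSpace ℝ (Fin p) → ℝ)
    (hQbar : ∀ N α, Qbar N α = ∫ ω, ((tot ni N : ℝ)⁻¹ *
        ∑ i ∈ Finset.range N, ∑ j : Fin (ni i),
          (qloss τ (y i j ω - max 0 ⟪x i j, α⟫) -
            qloss τ (y i j ω - max 0 ⟪x i j, α0⟫))) ∂P) :
    -- conclusion
    (∀ c : ℝ, 0 < c → c < min ε0 ϱ1 → ∀ N, ∀ α : EuclideanSpace ℝ (Fin p),
      (1/2) * ϱ1 * c ^ 2 *
          ((tot ni N : ℝ)⁻¹ * ∑ i ∈ Finset.range N, ∑ j : Fin (ni i),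
            (if ε0 ≤ ⟪x i j, α0⟫ then (1:ℝ) else 0) *
              (if c ≤ |⟪x i j, α - α0⟫| then (1:ℝ) else 0)) ≤ Qbar N α) ∧
    (∀ ε : ℝ, 0 < ε → ∃ c0 > (0:ℝ), ∃ N0 : ℕ, ∀ N, N0 ≤ N →
      ∀ α ∈ A, ε ≤ ‖α - α0‖ → c0 ≤ Qbar N α) :=
  censored_qr_population_objective_lower_bound_general P p q τ ni x z u hu_meas f hf_meas hf_nonneg
    hmarginal hquantile ϱ1 hϱ1 hf_lb A hA_cpt α0 hA2b D1 hD1 ε0 hε0 hA3 y hy Qbar hQbar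
end
end
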